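/- arXiv:2201.01331 — 8 statements merged into one kernel-verified Lean document; each statement's English description precedes it below -/
import Mathlib

section
/- Let ħ, m, e, B > 0, k_x, k_z ∈ ℝ and n ∈ ℕ; set ω_c = eB/m and y₀ = −ħ·k_x/(e·B), and define ψ : ℝ³ → ℂ by ψ(x,y,z) = exp(i(k_x·x + k_z·z))·exp(−eB(y − y₀)²/(2ħ))·He_n(√(2eB/ħ)·(y − y₀)). Then ψ is an eigenfunction of the Landau Hamiltonian: for all (x,y,z) ∈ ℝ³, (1/(2m))·[−ħ²(∂²ψ/∂x² + ∂²ψ/∂y² + ∂²ψ/∂z²) − 2iħeB·y·∂ψ/∂x + e²B²y²·ψ](x,y,z) = (ħ²k_z²/(2m) + ħω_c·(n + 1/2))·ψ(x,y,z). The discrete energies ħω_c(n + 1/2) are the Landau levels, degenerate in k_x. -/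
/-!
Separation of variables: `ψ` is a plane wave in `x` and `z` times the oscillator function
`φ(s) = exp(-a s²) He_n(c s)` in `s = y - y₀`, with `a = eB/(2ℏ)` and `c² = 4a`. Conjugating
`d/ds` by the Gaussian gives `P ↦ P' - 2aXP` on polynomials, and the Hermite equation
`He_n'' = X He_n' - n He_n` turns `φ'' = (4a²s² - 2a(2n+1)) φ` into a polynomial identity.
The remaining terms of the Hamiltonian combine into `(ℏk_x + eBy)² = e²B²(y - y₀)²`, which
cancels the oscillator potential.
-/

open Polynomial

namespace Polynomial

theorem derivative_hermite_succ (n : ℕ) :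
    derivative (hermite (n + 1)) = (n + 1 : ℤ[X]) * hermite n := by
  induction n with
  | zero => simp
  | succ k ih =>
    rw [hermite_succ (k + 1), derivative_sub, derivative_mul, derivative_X, ih,
      derivative_mul, hermite_succ k]
    simp only [derivative_add, derivative_natCast, derivative_one, zero_add, add_zero, zero_mul]
    push_cast
    ring

theorem derivative_derivative_hermite (n : ℕ) :
    derivative (derivative (hermite n)) = X * derivative (hermite n) - (n : ℤ[X]) * hermite n := by
  cases n with
  | zero => simp
  | succ k =>
    rw [derivative_hermite_succ, derivative_mul, hermite_succ k]
    simp only [derivative_add, derivative_natCast, derivative_one, zero_add, zero_mul]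
    push_cast
    ring

variable {R : Type*} [CommRing R]

noncomputable def gaussianDerivative (a : R) (P : R[X]) : R[X] := derivative P - C (2 * a) * X * P

theorem gaussianDerivative_gaussianDerivative_comp {a c n : R} (hc : c ^ 2 = 4 * a) {H : R[X]}
    (hH : derivative (derivative H) = X * derivative H - C n * H) :
    gaussianDerivative a (gaussianDerivative a (H.comp (C c * X))) =
      (C (4 * a ^ 2) * X ^ 2 - C (2 * a * (2 * n + 1))) * H.comp (C c * X) := by
  have hH' := congrArg (·.comp (C c * X)) hH
  simp only [sub_comp, mul_comp, X_comp, C_comp] at hH'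
  simp only [gaussianDerivative, derivative_sub, derivative_mul, derivative_comp, derivative_C,
    derivative_X, zero_mul, zero_add, mul_one, hH']
  have hc' : C c ^ 2 = C (4 * a) := by rw [← C_pow, hc]
  simp only [C_mul, C_add, C_pow, C_ofNat, C_1] at hc' ⊢
  linear_combination (X * C c * (derivative H).comp (C c * X) - C n * H.comp (C c * X)) * hc'

theorem derivative_derivative_hermite_map (n : ℕ) :
    derivative (derivative ((hermite n).map (Int.castRingHom R))) =
      X * derivative ((hermite n).map (Int.castRingHom R)) -
        C (n : R) * (hermite n).map (Int.castRingHom R) := by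
  rw [derivative_map, derivative_map, derivative_derivative_hermite]
  simp

end Polynomial

open Complex

theorem hasDerivAt_exp_mul_eval (a : ℝ) (P : ℝ[X]) (s : ℝ) :
    HasDerivAt (fun s => Real.exp (-(a * s ^ 2)) * P.eval s)
      (Real.exp (-(a * s ^ 2)) * (gaussianDerivative a P).eval s) s := by
  have hexp : HasDerivAt (fun s => Real.exp (-(a * s ^ 2)))
      (Real.exp (-(a * s ^ 2)) * -(a * (2 * s))) s := by
    simpa using ((hasDerivAt_pow 2 s).const_mul a).neg.exp
  refine (hexp.mul (P.hasDerivAt s)).congr_deriv ?_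
  simp only [gaussianDerivative, eval_sub, eval_mul, eval_C, eval_X]
  ring

theorem deriv_exp_mul_eval (a : ℝ) (P : ℝ[X]) :
    deriv (fun s => Real.exp (-(a * s ^ 2)) * P.eval s) =
      fun s => Real.exp (-(a * s ^ 2)) * (gaussianDerivative a P).eval s :=
  funext fun s => (hasDerivAt_exp_mul_eval a P s).deriv

theorem deriv_deriv_exp_mul_aeval_hermite {a c : ℝ} (hc : c ^ 2 = 4 * a) (n : ℕ) (s : ℝ) :
    deriv (deriv fun s => Real.exp (-(a * s ^ 2)) * aeval (c * s) (hermite n)) s =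
      (4 * a ^ 2 * s ^ 2 - 2 * a * (2 * n + 1)) *
        (Real.exp (-(a * s ^ 2)) * aeval (c * s) (hermite n)) := by
  have hH : ∀ s, aeval (c * s) (hermite n) =
      (((hermite n).map (Int.castRingHom ℝ)).comp (C c * X)).eval s := fun s => by
    rw [eval_comp, ← algebraMap_int_eq, eval_map_algebraMap]
    simp
  simp only [hH, deriv_exp_mul_eval,
    gaussianDerivative_gaussianDerivative_comp hc (derivative_derivative_hermite_map n)]
  simp only [eval_mul, eval_sub, eval_C, eval_pow, eval_X]
  ring

theorem deriv_ofReal_comp (f : ℝ → ℝ) :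
    deriv (fun t => (f t : ℂ)) = fun t => ((deriv f t : ℝ) : ℂ) := by
  funext t
  by_cases hf : DifferentiableAt ℝ f t
  · exact hf.hasDerivAt.ofReal_comp.deriv
  · have hf' : ¬DifferentiableAt ℝ (fun t => (f t : ℂ)) t := fun h =>
      hf (by simpa [Function.comp_def] using (reCLM.differentiableAt.comp t h))
    rw [deriv_zero_of_not_differentiableAt hf, deriv_zero_of_not_differentiableAt hf', ofReal_zero]

theorem deriv_cexp_I_mul (k : ℝ) :
    deriv (fun t : ℝ => cexp (I * k * t)) = fun t : ℝ => I * k * cexp (I * k * t) := by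
  funext t
  have h := ((hasDerivAt_id (t : ℂ)).const_mul (I * k)).cexp.comp_ofReal
  simpa [mul_comm] using h.deriv

theorem landau_levels_general
    (ℏ m e B k_x k_z : ℝ) (hℏ : 0 < ℏ) (he : 0 < e) (hB : 0 < B)
    (n : ℕ) (ω_c y₀ : ℝ)
    (hω : ω_c = e * B / m) (hy₀ : y₀ = -(ℏ * k_x) / (e * B))
    (ψ : ℝ → ℝ → ℝ → ℂ)
    (hψ : ∀ x y z : ℝ,
      ψ x y z =
        Complex.exp (Complex.I * ((k_x * x + k_z * z : ℝ) : ℂ))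
          * Complex.exp (-(((e * B * (y - y₀) ^ 2 / (2 * ℏ) : ℝ) : ℂ)))
          * Polynomial.aeval ((Real.sqrt (2 * e * B / ℏ) * (y - y₀) : ℝ) : ℂ)
              (Polynomial.hermite n)) :
    ∀ x y z : ℝ,
      (1 / (2 * (m : ℂ))) *
          (-(ℏ : ℂ) ^ 2 *
              (deriv (deriv (fun t : ℝ => ψ t y z)) x
                + deriv (deriv (fun t : ℝ => ψ x t z)) y
                + deriv (deriv (fun t : ℝ => ψ x y t)) z)
            - 2 * Complex.I * (ℏ : ℂ) * (e : ℂ) * (B : ℂ) * (y : ℂ)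
                * deriv (fun t : ℝ => ψ t y z) x
            + (e : ℂ) ^ 2 * (B : ℂ) ^ 2 * (y : ℂ) ^ 2 * ψ x y z)
        = ((ℏ ^ 2 * k_z ^ 2 / (2 * m) + ℏ * ω_c * ((n : ℝ) + 1 / 2) : ℝ) : ℂ) * ψ x y z := by
  intro x y z
  set a := e * B / (2 * ℏ) with ha
  set c := √(2 * e * B / ℏ) with hc_def
  have hc : c ^ 2 = 4 * a := by
    rw [hc_def, Real.sq_sqrt (by positivity), ha]
    ring
  have hψ' : ψ = fun (x y z : ℝ) => cexp (I * k_x * x) * cexp (I * k_z * z) *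
      ((Real.exp (-(a * (y - y₀) ^ 2)) * aeval (c * (y - y₀)) (hermite n) : ℝ) : ℂ) := by
    funext x y z
    have hpoly : ∀ r : ℝ, aeval (r : ℂ) (hermite n) = ((aeval r (hermite n) : ℝ) : ℂ) :=
      fun r => aeval_algebraMap_apply ℂ r _
    rw [hψ, hpoly]
    simp only [ofReal_mul, ofReal_exp, ← mul_assoc, ← exp_add]
    congr 2
    push_cast [ha]
    ring
  subst hψ'
  simp only [deriv_mul_const_field', deriv_const_mul_field', deriv_cexp_I_mul, deriv_ofReal_comp,
    deriv_comp_sub_const (f := fun s => Real.exp (-(a * s ^ 2)) * aeval (c * s) (hermite n)),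
    deriv_comp_sub_const (f := deriv fun s => Real.exp (-(a * s ^ 2)) * aeval (c * s) (hermite n)),
    deriv_deriv_exp_mul_aeval_hermite hc]
  have henergy : ℏ ^ 2 * k_x ^ 2 - ℏ ^ 2 * (4 * a ^ 2 * (y - y₀) ^ 2 - 2 * a * (2 * n + 1))
      + 2 * ℏ * e * B * y * k_x + e ^ 2 * B ^ 2 * y ^ 2 = 2 * ℏ * e * B * (n + 1 / 2) := by
    rw [ha, hy₀]
    field_simp
    ring
  have henergyC := congrArg ((↑) : ℝ → ℂ) henergy
  rw [hω]
  generalize cexp (I * k_x * x) = Ex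
  generalize cexp (I * k_z * z) = Ez
  generalize Real.exp (-(a * (y - y₀) ^ 2)) * aeval (c * (y - y₀)) (hermite n) = Φ
  push_cast at henergyC ⊢
  linear_combination (Ex * Ez * Φ / (2 * m)) * henergyC
    - ((ℏ ^ 2 * k_x ^ 2 + ℏ ^ 2 * k_z ^ 2 + 2 * ℏ * e * B * y * k_x) * Ex * Ez * Φ / (2 * m)) * I_sq

/-- Landau levels: in the Landau gauge `A_ext = (−B·y, 0, 0)`, the function
`ψ(x,y,z) = exp(i(k_x x + k_z z)) · exp(−eB(y−y₀)²/(2ℏ)) · He_n(√(2eB/ℏ)(y−y₀))`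
with `y₀ = −ℏ k_x/(eB)` is an eigenfunction of the Landau Hamiltonian with
eigenvalue `ℏ²k_z²/(2m) + ℏω_c(n + 1/2)`, where `ω_c = eB/m`. -/
theorem landau_levels
    (ℏ m e B k_x k_z : ℝ) (hℏ : 0 < ℏ) (hm : 0 < m) (he : 0 < e) (hB : 0 < B)
    (n : ℕ) (ω_c y₀ : ℝ)
    (hω : ω_c = e * B / m) (hy₀ : y₀ = -(ℏ * k_x) / (e * B))
    (ψ : ℝ → ℝ → ℝ → ℂ)
    (hψ : ∀ x y z : ℝ,
      ψ x y z =
        Complex.exp (Complex.I * ((k_x * x + k_z * z : ℝ) : ℂ))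
          * Complex.exp (-(((e * B * (y - y₀) ^ 2 / (2 * ℏ) : ℝ) : ℂ)))
          * Polynomial.aeval ((Real.sqrt (2 * e * B / ℏ) * (y - y₀) : ℝ) : ℂ)
              (Polynomial.hermite n)) :
    ∀ x y z : ℝ,
      (1 / (2 * (m : ℂ))) *
          (-(ℏ : ℂ) ^ 2 *
              (deriv (deriv (fun t : ℝ => ψ t y z)) x
                + deriv (deriv (fun t : ℝ => ψ x t z)) y
                + deriv (deriv (fun t : ℝ => ψ x y t)) z)
            - 2 * Complex.I * (ℏ : ℂ) * (e : ℂ) * (B : ℂ) * (y : ℂ)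
                * deriv (fun t : ℝ => ψ t y z) x
            + (e : ℂ) ^ 2 * (B : ℂ) ^ 2 * (y : ℂ) ^ 2 * ψ x y z)
        = ((ℏ ^ 2 * k_z ^ 2 / (2 * m) + ℏ * ω_c * ((n : ℝ) + 1 / 2) : ℝ) : ℂ) * ψ x y z :=
  landau_levels_general ℏ m e B k_x k_z hℏ he hB n ω_c y₀ hω hy₀ ψ hψ
end

section
/- Let Φ = B·a₁·a₂·sin θ and Φ₀ = 2πħ/e. (i) If Φ/Φ₀ ∈ ℤ, then the magnetic translations pairwise commute: M_{(n,m)}(M_{(n′,m′)}ψ)(x,y) = M_{(n′,m′)}(M_{(n,m)}ψ)(x,y) for all (n,m),(n′,m′) ∈ ℤ², all ψ : ℝ² → ℂ and all (x,y) ∈ ℝ². (ii) If moreover a₂·cos θ = l·a₁ for some l ∈ ℤ, then the magnetic translations satisfy closure, M_{(n,m)}(M_{(n′,m′)}ψ) = M_{(n+n′, m+m′)}ψ pointwise for all indices and all ψ; together with identity M_{(0,0)} and inverses M_{(−n,−m)} they thus form an abelian group. -/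
/-- The magnetic translation group: (i) if the magnetic flux through the unit
cell is an integer multiple of the flux quantum, `Φ = B a₁ a₂ sin θ = q·Φ₀`
with `Φ₀ = 2πℏ/e`, then the magnetic translations pairwise commute; (ii) if
moreover `a₂ cos θ = l·a₁` for some integer `l`, then they satisfy closure
`M_{(n,m)} M_{(n′,m′)} = M_{(n+n′,m+m′)}`, with identity `M_{(0,0)}` and
inverses `M_{(−n,−m)}`, so they form an abelian group. -/
theorem magnetic_translation_group
    (a₁ a₂ θ B e ℏ : ℝ) (ha₁ : 0 < a₁) (ha₂ : 0 < a₂)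
    (hθ : θ ∈ Set.Ioo 0 Real.pi) (hB : 0 < B) (he : 0 < e) (hℏ : 0 < ℏ)
    (M : ℤ → ℤ → (ℝ → ℝ → ℂ) → ℝ → ℝ → ℂ)
    (hM : ∀ (n m : ℤ) (ψ : ℝ → ℝ → ℂ) (x y : ℝ),
      M n m ψ x y =
        Complex.exp (Complex.I * ((e * B * (m : ℝ) * a₂ * Real.sin θ / ℏ * x : ℝ) : ℂ))
          * ψ (x + (n : ℝ) * a₁ + (m : ℝ) * a₂ * Real.cos θ) (y + (m : ℝ) * a₂ * Real.sin θ))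
    (hflux : ∃ q : ℤ, B * a₁ * a₂ * Real.sin θ = (q : ℝ) * (2 * Real.pi * ℏ / e)) :
    (∀ (n m n' m' : ℤ) (ψ : ℝ → ℝ → ℂ) (x y : ℝ),
        M n m (M n' m' ψ) x y = M n' m' (M n m ψ) x y)
    ∧ ((∃ l : ℤ, a₂ * Real.cos θ = (l : ℝ) * a₁) →
        (∀ (n m n' m' : ℤ) (ψ : ℝ → ℝ → ℂ) (x y : ℝ),
            M n m (M n' m' ψ) x y = M (n + n') (m + m') ψ x y)
        ∧ (∀ (ψ : ℝ → ℝ → ℂ) (x y : ℝ), M 0 0 ψ x y = ψ x y)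
        ∧ (∀ (n m : ℤ) (ψ : ℝ → ℝ → ℂ) (x y : ℝ), M n m (M (-n) (-m) ψ) x y = ψ x y)) := by
  obtain ⟨q, hq⟩ := hflux
  have he' : e ≠ 0 := ne_of_gt he
  have hℏ' : ℏ ≠ 0 := ne_of_gt hℏ
  have hc : e * B * a₂ * Real.sin θ / ℏ * a₁ = (q : ℝ) * (2 * Real.pi) := by
    field_simp
    field_simp at hq
    linarith
  -- exp(I r₁) exp(I r₂) = exp(I s₁) exp(I s₂) whenever the phases differ by 2π q k
  have hexp2 : ∀ (r₁ r₂ s₁ s₂ : ℝ) (k : ℤ),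
      r₁ + r₂ = s₁ + s₂ + 2 * Real.pi * ((q : ℝ) * (k : ℝ)) →
      Complex.exp (Complex.I * (r₁ : ℂ)) * Complex.exp (Complex.I * (r₂ : ℂ))
        = Complex.exp (Complex.I * (s₁ : ℂ)) * Complex.exp (Complex.I * (s₂ : ℂ)) := by
    intro r₁ r₂ s₁ s₂ k h
    rw [← Complex.exp_add, ← Complex.exp_add]
    have : Complex.I * (r₁ : ℂ) + Complex.I * (r₂ : ℂ)
        = (Complex.I * (s₁ : ℂ) + Complex.I * (s₂ : ℂ))
          + ((q * k : ℤ) : ℂ) * (2 * (Real.pi : ℂ) * Complex.I) := by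
      have hr : (r₁ : ℂ) + (r₂ : ℂ) = (s₁ : ℂ) + (s₂ : ℂ)
          + 2 * (Real.pi : ℂ) * (((q : ℝ) : ℂ) * ((k : ℝ) : ℂ)) := by
        push_cast
        exact_mod_cast congrArg (fun t : ℝ => (t : ℂ)) h
      push_cast at hr ⊢
      linear_combination Complex.I * hr
    rw [this, Complex.exp_add, Complex.exp_int_mul_two_pi_mul_I, mul_one]
  have hexp1 : ∀ (r₁ r₂ s : ℝ) (k : ℤ),
      r₁ + r₂ = s + 2 * Real.pi * ((q : ℝ) * (k : ℝ)) →
      Complex.exp (Complex.I * (r₁ : ℂ)) * Complex.exp (Complex.I * (r₂ : ℂ))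
        = Complex.exp (Complex.I * (s : ℂ)) := by
    intro r₁ r₂ s k h
    have := hexp2 r₁ r₂ s 0 k (by simpa using h)
    simpa using this
  have hid : ∀ (ψ : ℝ → ℝ → ℂ) (x y : ℝ), M 0 0 ψ x y = ψ x y := by
    intro ψ x y
    rw [hM]
    norm_num
  constructor
  · intro n m n' m' ψ x y
    rw [hM, hM, hM, hM, ← mul_assoc, ← mul_assoc]
    have hψ : ψ (x + (n' : ℝ) * a₁ + (m' : ℝ) * a₂ * Real.cos θ + (n : ℝ) * a₁
          + (m : ℝ) * a₂ * Real.cos θ)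
        (y + (m' : ℝ) * a₂ * Real.sin θ + (m : ℝ) * a₂ * Real.sin θ)
        = ψ (x + (n : ℝ) * a₁ + (m : ℝ) * a₂ * Real.cos θ + (n' : ℝ) * a₁
          + (m' : ℝ) * a₂ * Real.cos θ)
        (y + (m : ℝ) * a₂ * Real.sin θ + (m' : ℝ) * a₂ * Real.sin θ) := by
      ring_nf
    rw [hψ]
    congr 1
    apply hexp2 _ _ _ _ (m' * n - m * n')
    push_cast
    linear_combination ((m' : ℝ) * n - (m : ℝ) * n') * hc
  · rintro ⟨l, hl⟩
    have hclosure : ∀ (n m n' m' : ℤ) (ψ : ℝ → ℝ → ℂ) (x y : ℝ),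
        M n m (M n' m' ψ) x y = M (n + n') (m + m') ψ x y := by
      intro n m n' m' ψ x y
      rw [hM, hM, hM, ← mul_assoc]
      have hψ : ψ (x + (n : ℝ) * a₁ + (m : ℝ) * a₂ * Real.cos θ + (n' : ℝ) * a₁
            + (m' : ℝ) * a₂ * Real.cos θ)
          (y + (m : ℝ) * a₂ * Real.sin θ + (m' : ℝ) * a₂ * Real.sin θ)
          = ψ (x + ((n + n' : ℤ) : ℝ) * a₁ + ((m + m' : ℤ) : ℝ) * a₂ * Real.cos θ)
          (y + ((m + m' : ℤ) : ℝ) * a₂ * Real.sin θ) := by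
        push_cast
        ring_nf
      rw [hψ]
      congr 1
      apply hexp1 _ _ _ (m' * (n + m * l))
      push_cast
      linear_combination ((m' : ℝ) * ((n : ℝ) + (m : ℝ) * (l : ℝ))) * hc
        + (e * B * a₂ * Real.sin θ / ℏ * (m : ℝ) * (m' : ℝ)) * hl
    refine ⟨hclosure, hid, ?_⟩
    intro n m ψ x y
    rw [hclosure]
    simpa using hid ψ x y
end

section
/- Let ħ, m > 0, n > 0, t ∈ ℝ, K ∈ ℝ², and 0 ≤ γ < 1. Then for all q ∈ ℝ², ℰ_γ(q) ≥ (ħ²/(2m))·(t − ‖K‖²/n), with equality if and only if q = −(1/n)·K. In particular, for all subcritical couplings the minimizing momentum-space origin q₀ = −K/n and the minimum energy density (ħ²/(2m))·(t − ‖K‖²/n) are independent of γ: the ground state of the free electron gas in the thermodynamic limit is unchanged by the coupling to the cavity. -/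
/-!
Completing the square, `2⟪q, K⟫ + n‖q‖² = (‖K + n q‖² - ‖K‖²) / n`, turns the energy density
into `(ℏ²/(2m)) (t - ‖K‖²/n + (1 - γ)/n ‖K + n q‖²)`. The cavity term only rescales the
square by `1 - γ`, which stays positive for `γ < 1`, so the minimizer `K + n q = 0` and the
minimum are those of the uncoupled gas.
-/

open scoped RealInnerProductSpace

section CompletingTheSquare

variable {E : Type*} [NormedAddCommGroup E] [InnerProductSpace ℝ E]

theorem two_inner_add_mul_norm_sq_eq {n : ℝ} (hn : n ≠ 0) (q K : E) :
    2 * ⟪q, K⟫ + n * ‖q‖ ^ 2 = (‖K + n • q‖ ^ 2 - ‖K‖ ^ 2) / n := by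
  rw [norm_add_sq_real, real_inner_smul_right, norm_smul, real_inner_comm, mul_pow,
    Real.norm_eq_abs, sq_abs]
  field_simp
  ring

theorem cavity_energy_sub_min_eq {n : ℝ} (hn : n ≠ 0) (t γ : ℝ) (q K : E) :
    (t + 2 * ⟪q, K⟫ + n * ‖q‖ ^ 2 - γ / n * ‖K + n • q‖ ^ 2) - (t - ‖K‖ ^ 2 / n)
      = (1 - γ) / n * ‖K + n • q‖ ^ 2 := by
  rw [add_assoc t, two_inner_add_mul_norm_sq_eq hn]
  field_simp
  ring

theorem add_smul_eq_zero_iff_eq_neg_inv_smul {n : ℝ} (hn : n ≠ 0) (q K : E) :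
    K + n • q = 0 ↔ q = -(1 / n) • K := by
  rw [one_div, neg_smul, ← smul_neg, eq_inv_smul_iff₀ hn, add_eq_zero_iff_eq_neg']

end CompletingTheSquare

theorem ground_state_independent_of_cavity_coupling_general
    (ℏ m n t : ℝ) (hℏ : 0 < ℏ) (hm : 0 < m) (hn : 0 < n)
    (K : EuclideanSpace ℝ (Fin 2)) (γ : ℝ) (hγ₁ : γ < 1) :
    ∀ q : EuclideanSpace ℝ (Fin 2),
      ℏ ^ 2 / (2 * m) * (t + 2 * ⟪q, K⟫ + n * ‖q‖ ^ 2 - γ / n * ‖K + n • q‖ ^ 2)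
          ≥ ℏ ^ 2 / (2 * m) * (t - ‖K‖ ^ 2 / n)
      ∧ (ℏ ^ 2 / (2 * m) * (t + 2 * ⟪q, K⟫ + n * ‖q‖ ^ 2 - γ / n * ‖K + n • q‖ ^ 2)
            = ℏ ^ 2 / (2 * m) * (t - ‖K‖ ^ 2 / n)
          ↔ q = -(1 / n) • K) := by
  intro q
  have hc : 0 < ℏ ^ 2 / (2 * m) := by positivity
  have ha : 0 < (1 - γ) / n := div_pos (sub_pos.mpr hγ₁) hn
  have hgap := cavity_energy_sub_min_eq hn.ne' t γ q K
  refine ⟨?_, ?_⟩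
  · refine mul_le_mul_of_nonneg_left ?_ hc.le
    nlinarith [sq_nonneg ‖K + n • q‖]
  · rw [mul_right_inj' hc.ne', ← sub_eq_zero, hgap, mul_eq_zero, or_iff_right ha.ne',
      sq_eq_zero_iff, norm_eq_zero, add_smul_eq_zero_iff_eq_neg_inv_smul hn.ne']

/-- For subcritical coupling `0 ≤ γ < 1`, the energy density of the 2D free
electron gas coupled to a cavity mode is minimized exactly at the
momentum-space origin `q₀ = −K/n`, with minimum value
`(ℏ²/(2m))(t − ‖K‖²/n)`, both independent of `γ`. -/
theorem ground_state_independent_of_cavity_coupling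
    (ℏ m n t : ℝ) (hℏ : 0 < ℏ) (hm : 0 < m) (hn : 0 < n)
    (K : EuclideanSpace ℝ (Fin 2)) (γ : ℝ) (hγ₀ : 0 ≤ γ) (hγ₁ : γ < 1) :
    ∀ q : EuclideanSpace ℝ (Fin 2),
      ℏ ^ 2 / (2 * m) * (t + 2 * ⟪q, K⟫ + n * ‖q‖ ^ 2 - γ / n * ‖K + n • q‖ ^ 2)
          ≥ ℏ ^ 2 / (2 * m) * (t - ‖K‖ ^ 2 / n)
      ∧ (ℏ ^ 2 / (2 * m) * (t + 2 * ⟪q, K⟫ + n * ‖q‖ ^ 2 - γ / n * ‖K + n • q‖ ^ 2)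
            = ℏ ^ 2 / (2 * m) * (t - ‖K‖ ^ 2 / n)
          ↔ q = -(1 / n) • K) :=
  ground_state_independent_of_cavity_coupling_general ℏ m n t hℏ hm hn K γ hγ₁
end

section
/- Let ħ, m > 0, n > 0, t ∈ ℝ and K ∈ ℝ², and let γ = 1 (the critical coupling). Then ℰ_1(q) = (ħ²/(2m))·(t − ‖K‖²/n) for every q ∈ ℝ²: at the critical coupling the energy density is independent of the origin q of the momentum-space distribution, so all shifted Fermi distributions are energetically degenerate and the ground state is infinitely degenerate. -/
open scoped RealInnerProductSpace

/-- At the critical coupling `γ = 1`, the energy density of the 2D free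
electron gas coupled to a cavity mode is independent of the origin `q` of the
momentum-space distribution: all shifted Fermi distributions are
energetically degenerate, so the ground state is infinitely degenerate. -/
theorem critical_coupling_infinite_degeneracy
    (ℏ m n t : ℝ) (hℏ : 0 < ℏ) (hm : 0 < m) (hn : 0 < n)
    (K : EuclideanSpace ℝ (Fin 2)) :
    ∀ q : EuclideanSpace ℝ (Fin 2),
      ℏ ^ 2 / (2 * m) * (t + 2 * ⟪q, K⟫ + n * ‖q‖ ^ 2 - (1 : ℝ) / n * ‖K + n • q‖ ^ 2)
        = ℏ ^ 2 / (2 * m) * (t - ‖K‖ ^ 2 / n) := by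
  intro q
  have h : ‖K + n • q‖ ^ 2 = ‖K‖ ^ 2 + 2 * (n * ⟪q, K⟫) + n ^ 2 * ‖q‖ ^ 2 := by
    rw [norm_add_sq_real, inner_smul_right, norm_smul, real_inner_comm]
    simp [abs_of_pos hn, mul_pow]
  rw [h]
  field_simp
  ring
end

section
/- Let ħ, m > 0, n > 0, t ∈ ℝ, K ∈ ℝ², and γ > 1. Then ℰ_γ is unbounded from below: for every M ∈ ℝ there exists q ∈ ℝ² with ℰ_γ(q) < M. Hence beyond the critical coupling γ_c = 1 the coupled electron–photon system has no ground state; since omitting the diamagnetic A² term replaces the bounded coupling γ = ω_p²/(ω² + ω_p²) ≤ 1 by γ′ = ω_p²/ω², which has no upper bound, the free electron gas coupled to a cavity without the A² term is unstable and has no ground state for sufficiently large electron density. -/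
open scoped RealInnerProductSpace

/-!
Completing the square in `p = K + n q` turns the energy into
`ħ²/(2m) · (t - ‖K‖²/n + (1 - γ)/n · ‖K + n q‖²)`, a quadratic in `‖K + n q‖` whose leading
coefficient is negative exactly when `γ > 1`; since `q ↦ K + n q` is onto, `‖K + n q‖` can be
made arbitrarily large.
-/

open Filter

theorem complete_square_norm_add_smul {E : Type*} [NormedAddCommGroup E]
    [InnerProductSpace ℝ E] (t γ : ℝ) {n : ℝ} (hn : n ≠ 0) (q K : E) :
    t + 2 * ⟪q, K⟫ + n * ‖q‖ ^ 2 - γ / n * ‖K + n • q‖ ^ 2 =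
      t - ‖K‖ ^ 2 / n + (1 - γ) / n * ‖K + n • q‖ ^ 2 := by
  rw [norm_add_sq_real, inner_smul_right, real_inner_comm, norm_smul, Real.norm_eq_abs, mul_pow,
    sq_abs]
  field_simp
  ring

theorem exists_add_mul_norm_sq_lt {E : Type*} [NormedAddCommGroup E] [NormedSpace ℝ E]
    [Nontrivial E] {a : ℝ} (ha : a < 0) (b M : ℝ) : ∃ v : E, b + a * ‖v‖ ^ 2 < M := by
  have hlim : Tendsto (fun r : ℝ => b + a * r ^ 2) atTop atBot :=
    tendsto_atBot_add_const_left _ b <|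
      (tendsto_pow_atTop two_ne_zero).const_mul_atTop_of_neg ha
  obtain ⟨r, hrM, hr⟩ := ((hlim.eventually_lt_atBot M).and (eventually_ge_atTop 0)).exists
  obtain ⟨v, rfl⟩ := exists_norm_eq E hr
  exact ⟨v, hrM⟩

/-- Beyond the critical coupling, `γ > 1`, the energy density of the 2D free
electron gas coupled to a cavity mode is unbounded from below, so the coupled
electron–photon system has no ground state. Since omitting the diamagnetic A²
term replaces the bounded coupling `γ ≤ 1` by an unbounded one, the electron
gas in a cavity without the A² term is unstable for large enough density. -/
theorem no_ground_state_beyond_critical_coupling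
    (ℏ m n t : ℝ) (hℏ : 0 < ℏ) (hm : 0 < m) (hn : 0 < n)
    (K : EuclideanSpace ℝ (Fin 2)) (γ : ℝ) (hγ : 1 < γ) :
    ∀ M : ℝ, ∃ q : EuclideanSpace ℝ (Fin 2),
      ℏ ^ 2 / (2 * m) * (t + 2 * ⟪q, K⟫ + n * ‖q‖ ^ 2 - γ / n * ‖K + n • q‖ ^ 2) < M := by
  intro M
  have hprefactor : 0 < ℏ ^ 2 / (2 * m) := by positivity
  have hcoeff : (1 - γ) / n < 0 := div_neg_of_neg_of_pos (by linarith) hn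
  obtain ⟨v, hv⟩ := exists_add_mul_norm_sq_lt (E := EuclideanSpace ℝ (Fin 2)) hcoeff
    (t - ‖K‖ ^ 2 / n) (M / (ℏ ^ 2 / (2 * m)))
  have hKq : K + n • n⁻¹ • (v - K) = v := by
    rw [smul_inv_smul₀ hn.ne', add_sub_cancel]
  refine ⟨n⁻¹ • (v - K), ?_⟩
  rw [complete_square_norm_add_smul t γ hn.ne', hKq, mul_comm]
  exact (lt_div_iff₀ hprefactor).mp hv
end

section
/- Let ε₀, ω, ω_p > 0, ω̃ = √(ω² + ω_p²) and γ = ω_p²/ω̃². Then for every broadening η > 0, Re σ(0, η) = (ε₀ ω_p²/η)·(1 − ω_p²/(ω̃² + η²)); consequently η·Re σ(0, η) converges to ε₀ ω_p²·(1 − γ) as η → 0⁺. In other words, the DC (Drude) conductivity of the electron gas inside the cavity is σ_dc(γ) = σ⁰_dc·(1 − γ): the cavity suppresses the Drude peak linearly in the collective coupling γ. -/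
/-- Cavity suppression of the Drude peak: for every broadening `η > 0` the
real part of the optical conductivity at zero frequency is
`Re σ(0,η) = (ε₀ω_p²/η)(1 − ω_p²/(ω̃² + η²))`, and `η·Re σ(0,η)` converges to
`ε₀ω_p²(1 − γ)` as `η → 0⁺`; i.e. the DC conductivity inside the cavity is
`σ_dc(γ) = σ⁰_dc·(1 − γ)`, suppressed linearly in the collective coupling. -/
theorem cavity_suppression_of_drude_peak
    (ε₀ ω ω_p : ℝ) (hε₀ : 0 < ε₀) (hω : 0 < ω) (hω_p : 0 < ω_p)
    (ωt γ : ℝ) (hωt : ωt = Real.sqrt (ω ^ 2 + ω_p ^ 2)) (hγ : γ = ω_p ^ 2 / ωt ^ 2)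
    (Reσ : ℝ → ℝ → ℝ)
    (hσ : ∀ w η : ℝ, Reσ w η =
      ε₀ * η * ω_p ^ 2 / (w ^ 2 + η ^ 2)
        - η * ε₀ * ω_p ^ 4 / (2 * ωt * (w ^ 2 + η ^ 2)) *
            ((2 * w + ωt) / ((w + ωt) ^ 2 + η ^ 2)
              - (2 * w - ωt) / ((w - ωt) ^ 2 + η ^ 2))) :
    (∀ η : ℝ, 0 < η →
        Reσ 0 η = ε₀ * ω_p ^ 2 / η * (1 - ω_p ^ 2 / (ωt ^ 2 + η ^ 2)))
    ∧ Filter.Tendsto (fun η : ℝ => η * Reσ 0 η) (nhdsWithin 0 (Set.Ioi 0))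
        (nhds (ε₀ * ω_p ^ 2 * (1 - γ))) := by
  have hωt2 : ωt ^ 2 = ω ^ 2 + ω_p ^ 2 := by
    rw [hωt, Real.sq_sqrt]; positivity
  have hωtpos : 0 < ωt := by
    rw [hωt]; exact Real.sqrt_pos.mpr (by positivity)
  have key : ∀ η : ℝ, 0 < η →
      Reσ 0 η = ε₀ * ω_p ^ 2 / η * (1 - ω_p ^ 2 / (ωt ^ 2 + η ^ 2)) := by
    intro η hη
    rw [hσ]
    have h1 : ωt ^ 2 + η ^ 2 > 0 := by positivity
    field_simp
    ring
  refine ⟨key, ?_⟩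
  have heq : (fun η : ℝ => ε₀ * ω_p ^ 2 * (1 - ω_p ^ 2 / (ωt ^ 2 + η ^ 2)))
      =ᶠ[nhdsWithin 0 (Set.Ioi 0)] (fun η : ℝ => η * Reσ 0 η) := by
    filter_upwards [self_mem_nhdsWithin] with η hη
    rw [key η hη]
    have hη' : (η:ℝ) ≠ 0 := ne_of_gt hη
    field_simp
  refine Filter.Tendsto.congr' heq ?_
  have hlim : Filter.Tendsto (fun η : ℝ => ε₀ * ω_p ^ 2 * (1 - ω_p ^ 2 / (ωt ^ 2 + η ^ 2)))
      (nhds 0) (nhds (ε₀ * ω_p ^ 2 * (1 - γ))) := by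
    have : ContinuousAt (fun η : ℝ => ε₀ * ω_p ^ 2 * (1 - ω_p ^ 2 / (ωt ^ 2 + η ^ 2))) 0 := by
      apply ContinuousAt.mul continuousAt_const
      apply ContinuousAt.sub continuousAt_const
      apply ContinuousAt.div continuousAt_const
      · fun_prop
      · simp; positivity
    have h := this.tendsto
    simpa [hγ] using h
  exact hlim.mono_left nhdsWithin_le_nhds
end

section
/- Let c, ε₀, m, L_z, e > 0, N ∈ ℕ, ω̃ > 0 and Λ ≥ ω̃². Then the effective light–matter coupling constant of the 2D electron gas coupled to the in-plane continuum of cavity modes up to cutoff Λ satisfies g(Λ) = (e²N/(ε₀ m L_z))·(1/(4π²))·∫_{{(κ_x,κ_y) ∈ ℝ² : c²(κ_x² + κ_y²) + ω̃² ≤ Λ}} (c²(κ_x² + κ_y²) + ω̃²)⁻¹ d(κ_x,κ_y) = N·α·ln(Λ/ω̃²), where α = e²/(4π c² ε₀ m L_z). In particular g(Λ) → ∞ logarithmically as Λ → ∞ (ultraviolet divergence), while g remains finite for any finite Λ because ω̃² provides a natural infrared cutoff. -/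
/-!
In polar coordinates the area element of the momentum plane is `π d(|κ|²)`, so the integral
becomes `π ∫₀^{(Λ - ω̃²)/c²} ds / (c² s + ω̃²) = (π / c²) ln(Λ / ω̃²)`, and the prefactor
`e² N / (4π² ε₀ m L_z)` turns `π / c²` into `N α`.
-/

open MeasureTheory

open Real Set

theorem integral_comp_sq_add_sq {E : Type*} [NormedAddCommGroup E] [NormedSpace ℝ E]
    (g : ℝ → E) :
    ∫ κ : ℝ × ℝ, g (κ.1 ^ 2 + κ.2 ^ 2) = π • ∫ s in Ioi 0, g s := by
  have hpolar : ∀ p : ℝ × ℝ,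
      (polarCoord.symm p).1 ^ 2 + (polarCoord.symm p).2 ^ 2 = p.1 ^ 2 := by
    rintro ⟨r, θ⟩
    simp only [polarCoord_symm_apply]
    linear_combination r ^ 2 * sin_sq_add_cos_sq θ
  have hsq : ∫ r in Ioi (0 : ℝ), r • g (r ^ 2) = (2 : ℝ)⁻¹ • ∫ s in Ioi 0, g s := by
    rw [← integral_comp_rpow_Ioi_of_pos (g := g) two_pos, ← integral_smul]
    refine setIntegral_congr_fun measurableSet_Ioi fun r _ => ?_
    norm_num [smul_smul]
    ring_nf
  rw [← integral_comp_polarCoord_symm, polarCoord_target, Measure.volume_eq_prod,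
    ← Measure.prod_restrict]
  simp only [hpolar]
  rw [integral_fun_fst (fun r => r • g (r ^ 2)), hsq, smul_smul,
    measureReal_restrict_apply_univ, Real.volume_real_Ioo_of_le (by linarith [pi_pos])]
  ring_nf

theorem integral_inv_mul_add_of_le {a b Λ : ℝ} (ha : a ≠ 0) (hb : 0 < b) (hΛ : b ≤ Λ) :
    ∫ s in 0..(Λ - b) / a, (a * s + b)⁻¹ = a⁻¹ * log (Λ / b) := by
  rw [intervalIntegral.integral_comp_mul_add (fun x => x⁻¹) ha, integral_inv, smul_eq_mul]
  · congr 3 <;> field_simp <;> ring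
  · rw [mul_zero, zero_add, mul_div_cancel₀ _ ha, sub_add_cancel, uIcc_of_le hΛ]
    exact fun h => hb.not_ge h.1

theorem setIntegral_inv_mul_sq_add_sq_add_of_le {a b Λ : ℝ} (ha : 0 < a) (hb : 0 < b)
    (hΛ : b ≤ Λ) :
    ∫ κ in {κ : ℝ × ℝ | a * (κ.1 ^ 2 + κ.2 ^ 2) + b ≤ Λ}, (a * (κ.1 ^ 2 + κ.2 ^ 2) + b)⁻¹
      = π / a * log (Λ / b) := by
  have hdisk : {s : ℝ | a * s + b ≤ Λ} = Iic ((Λ - b) / a) := by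
    ext s
    rw [mem_ofPred_eq, mem_Iic, le_div_iff₀ ha]
    constructor <;> intro h <;> linarith
  rw [← integral_indicator (measurableSet_le (by fun_prop) (by fun_prop))]
  change ∫ κ : ℝ × ℝ, ((fun κ : ℝ × ℝ => κ.1 ^ 2 + κ.2 ^ 2) ⁻¹' {s | a * s + b ≤ Λ}).indicator
    ((fun s => (a * s + b)⁻¹) ∘ fun κ : ℝ × ℝ => κ.1 ^ 2 + κ.2 ^ 2) κ = _
  simp only [indicator_comp_right]
  rw [integral_comp_sq_add_sq, hdisk, integral_indicator measurableSet_Iic,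
    Measure.restrict_restrict measurableSet_Iic, Iic_inter_Ioi,
    ← intervalIntegral.integral_of_le (div_nonneg (by linarith) ha.le),
    integral_inv_mul_add_of_le ha.ne' hb hΛ, smul_eq_mul]
  ring

theorem effective_coupling_constant_logarithmic_general
    (c ε₀ m L_z e : ℝ) (hc : 0 < c)
    (N : ℕ) (ωt Λ α : ℝ) (hωt : 0 < ωt) (hΛ : ωt ^ 2 ≤ Λ)
    (hα : α = e ^ 2 / (4 * Real.pi * c ^ 2 * ε₀ * m * L_z)) :
    e ^ 2 * (N : ℝ) / (ε₀ * m * L_z) * (1 / (4 * Real.pi ^ 2)) *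
        ∫ κ in {κ : ℝ × ℝ | c ^ 2 * (κ.1 ^ 2 + κ.2 ^ 2) + ωt ^ 2 ≤ Λ},
          (c ^ 2 * (κ.1 ^ 2 + κ.2 ^ 2) + ωt ^ 2)⁻¹
      = (N : ℝ) * α * Real.log (Λ / ωt ^ 2) := by
  rw [setIntegral_inv_mul_sq_add_sq_add_of_le (by positivity) (by positivity) hΛ, hα]
  field_simp [pi_ne_zero]

/-- The effective light–matter coupling constant of the 2D electron gas
coupled to the in-plane continuum of cavity modes up to the ultraviolet cutoff
`Λ` equals `N·α·ln(Λ/ω̃²)`, with `α = e²/(4π c² ε₀ m L_z)`: it diverges only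
logarithmically in `Λ` and is infrared finite thanks to the natural infrared
cutoff `ω̃²`. -/
theorem effective_coupling_constant_logarithmic
    (c ε₀ m L_z e : ℝ) (hc : 0 < c) (hε₀ : 0 < ε₀) (hm : 0 < m)
    (hL : 0 < L_z) (he : 0 < e)
    (N : ℕ) (ωt Λ α : ℝ) (hωt : 0 < ωt) (hΛ : ωt ^ 2 ≤ Λ)
    (hα : α = e ^ 2 / (4 * Real.pi * c ^ 2 * ε₀ * m * L_z)) :
    e ^ 2 * (N : ℝ) / (ε₀ * m * L_z) * (1 / (4 * Real.pi ^ 2)) *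
        ∫ κ in {κ : ℝ × ℝ | c ^ 2 * (κ.1 ^ 2 + κ.2 ^ 2) + ωt ^ 2 ≤ Λ},
          (c ^ 2 * (κ.1 ^ 2 + κ.2 ^ 2) + ωt ^ 2)⁻¹
      = (N : ℝ) * α * Real.log (Λ / ωt ^ 2) :=
  effective_coupling_constant_logarithmic_general c ε₀ m L_z e hc N ωt Λ α hωt hΛ hα
end

section
/- Let ħ, c > 0, Λ₀ ≥ 1 and b ≥ 0. Define the zero-point energy per unit area as a function of the mirror distance L > 0 by f(L) = (ħ(Λ₀^{3/2} − 1)/(6π c²))·(π²c²/L² + b/L)^{3/2}. Then for every L > 0 the Casimir pressure is −f′(L) = (ħ(Λ₀^{3/2} − 1)/(4π c²))·(2π²c²/L³ + b/L²)·√(π²c²/L² + b/L), and in particular −f′(L) ≥ 0: the Casimir force between the cavity mirrors, modified by the interaction with the 2D electron gas, is repulsive. -/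
open Real

theorem HasDerivAt.rpow_three_halves {g : ℝ → ℝ} {g' x : ℝ} (hg : HasDerivAt g g' x) :
    HasDerivAt (fun y => g y ^ ((3 : ℝ) / 2)) (g' * (3 / 2) * √(g x)) x := by
  -- the exponent is `≥ 1`, so `y ↦ y ^ (3/2)` is differentiable even where `g x ≤ 0`
  have h := hg.rpow_const (p := (3 : ℝ) / 2) (Or.inr (by norm_num))
  rwa [show (3 : ℝ) / 2 - 1 = 1 / 2 by norm_num, ← sqrt_eq_rpow] at h

theorem hasDerivAt_div_sq_add_div (a b : ℝ) {L : ℝ} (hL : L ≠ 0) :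
    HasDerivAt (fun x => a / x ^ 2 + b / x) (-(2 * a / L ^ 3 + b / L ^ 2)) L := by
  have hsq : HasDerivAt (fun x : ℝ => a / x ^ 2) (-(2 * a / L ^ 3)) L :=
    ((hasDerivAt_const L a).fun_div (hasDerivAt_pow 2 L) (pow_ne_zero 2 hL)).congr_deriv
      (by field_simp; ring)
  have hlin : HasDerivAt (fun x : ℝ => b / x) (-(b / L ^ 2)) L :=
    ((hasDerivAt_const L b).fun_div (hasDerivAt_id' L) hL).congr_deriv (by ring)
  exact (hsq.add hlin).congr_deriv (by ring)

theorem casimir_force_repulsive_general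
    (ℏ c : ℝ) (hℏ : 0 < ℏ)
    (Λ₀ : ℝ) (hΛ₀ : 1 ≤ Λ₀) (b : ℝ) (hb : 0 ≤ b)
    (f : ℝ → ℝ)
    (hf : ∀ L : ℝ, f L =
      ℏ * (Λ₀ ^ ((3 : ℝ) / 2) - 1) / (6 * Real.pi * c ^ 2) *
        (Real.pi ^ 2 * c ^ 2 / L ^ 2 + b / L) ^ ((3 : ℝ) / 2)) :
    ∀ L : ℝ, 0 < L →
      -deriv f L =
          ℏ * (Λ₀ ^ ((3 : ℝ) / 2) - 1) / (4 * Real.pi * c ^ 2) *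
            (2 * Real.pi ^ 2 * c ^ 2 / L ^ 3 + b / L ^ 2) *
            Real.sqrt (Real.pi ^ 2 * c ^ 2 / L ^ 2 + b / L)
        ∧ 0 ≤ -deriv f L := by
  intro L hL
  have hfreq := hasDerivAt_div_sq_add_div (π ^ 2 * c ^ 2) b hL.ne'
  have hderiv :=
    (hfreq.rpow_three_halves.const_mul (ℏ * (Λ₀ ^ ((3 : ℝ) / 2) - 1) / (6 * π * c ^ 2))).deriv
  have hforce : -deriv f L = ℏ * (Λ₀ ^ ((3 : ℝ) / 2) - 1) / (4 * π * c ^ 2) *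
      (2 * π ^ 2 * c ^ 2 / L ^ 3 + b / L ^ 2) * √(π ^ 2 * c ^ 2 / L ^ 2 + b / L) := by
    rw [funext hf, hderiv]
    field_simp
    ring
  have hΛ : 0 ≤ Λ₀ ^ ((3 : ℝ) / 2) - 1 := sub_nonneg.2 (one_le_rpow hΛ₀ (by norm_num))
  exact ⟨hforce, hforce ▸ by positivity⟩

/-- Repulsive Casimir force: for the zero-point energy per unit area
`f(L) = (ℏ(Λ₀^{3/2} − 1)/(6πc²))·(π²c²/L² + b/L)^{3/2}` of the cavity modified
by the 2D electron gas, the Casimir pressure on the mirrors is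
`−f′(L) = (ℏ(Λ₀^{3/2} − 1)/(4πc²))·(2π²c²/L³ + b/L²)·√(π²c²/L² + b/L) ≥ 0`,
i.e. the force between the cavity mirrors is repulsive. -/
theorem casimir_force_repulsive
    (ℏ c : ℝ) (hℏ : 0 < ℏ) (hc : 0 < c)
    (Λ₀ : ℝ) (hΛ₀ : 1 ≤ Λ₀) (b : ℝ) (hb : 0 ≤ b)
    (f : ℝ → ℝ)
    (hf : ∀ L : ℝ, f L =
      ℏ * (Λ₀ ^ ((3 : ℝ) / 2) - 1) / (6 * Real.pi * c ^ 2) *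
        (Real.pi ^ 2 * c ^ 2 / L ^ 2 + b / L) ^ ((3 : ℝ) / 2)) :
    ∀ L : ℝ, 0 < L →
      -deriv f L =
          ℏ * (Λ₀ ^ ((3 : ℝ) / 2) - 1) / (4 * Real.pi * c ^ 2) *
            (2 * Real.pi ^ 2 * c ^ 2 / L ^ 3 + b / L ^ 2) *
            Real.sqrt (Real.pi ^ 2 * c ^ 2 / L ^ 2 + b / L)
        ∧ 0 ≤ -deriv f L :=
  casimir_force_repulsive_general ℏ c hℏ Λ₀ hΛ₀ b hb f hf
end
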